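/- For every ε ∈ (0,1), ∫₀¹ (min(1/√ε, 1/√(1−u)) − (2−√ε))² du ≤ log(1/ε). That is, if U is uniformly distributed on [0,1], then E[S_ε(U)²] ≤ log(1/ε). -/

import Mathlib

open MeasureTheory

universe u

/-- The statistic `S_ε(u) = min(1/√ε, 1/√(1−u)) − (2 − √ε)` for `u ∈ [0,1)`,
extended by the value `1/√ε − (2 − √ε)` at `u ≥ 1` (where `1/√(1−u)` is `+∞`). -/
noncomputable def Sstat (ε u : ℝ) : ℝ :=
  (if u < 1 then min (Real.sqrt ε)⁻¹ (Real.sqrt (1 - u))⁻¹ else (Real.sqrt ε)⁻¹)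
    - (2 - Real.sqrt ε)

/-!
With `s = √ε`, the integrand is `(1/√(1−u) − c)²` on `[0, 1−ε]`, where it has the primitive
`−log(1−u) + 4c√(1−u) + c²u`, and the constant `(1/s − c)²` on `(1−ε, 1)`. Adding the two pieces,
`∫₀¹ (min(1/s, 1/√(1−u)) − c)² du = log(1/ε) + 1 − (2 − s)² + (c − (2 − s))²`,
so `c = 2 − s` is the mean of the truncated variable and the integral is
`log(1/ε) − (1 − s)(3 − s) ≤ log(1/ε)`.
-/

open Real Set

theorem hasDerivAt_primitive_sq_inv_sqrt_one_sub_sub (c : ℝ) {u : ℝ} (hu : u < 1) :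
    HasDerivAt (fun u => -log (1 - u) + 4 * c * √(1 - u) + c ^ 2 * u)
      (((√(1 - u))⁻¹ - c) ^ 2) u := by
  have hpos : 0 < 1 - u := sub_pos.2 hu
  have hsub : HasDerivAt (fun u : ℝ => 1 - u) (-1) u := by
    simpa using (hasDerivAt_id u).const_sub 1
  refine ((((hasDerivAt_log hpos.ne').comp u hsub).neg.add
    (((hasDerivAt_sqrt hpos.ne').comp u hsub).const_mul (4 * c))).add
    ((hasDerivAt_id u).const_mul (c ^ 2))).congr_deriv ?_
  rw [show (1 - u)⁻¹ = (√(1 - u))⁻¹ ^ 2 by rw [inv_pow, sq_sqrt hpos.le]]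
  field_simp
  ring

theorem continuousOn_sq_inv_sqrt_one_sub_sub (c : ℝ) :
    ContinuousOn (fun u => ((√(1 - u))⁻¹ - c) ^ 2) (Iio 1) :=
  (((continuous_sqrt.comp (continuous_const.sub continuous_id)).continuousOn.inv₀
    fun _ hu => (sqrt_pos.2 (sub_pos.2 hu)).ne').sub continuousOn_const).pow 2

theorem uIcc_zero_one_sub_subset_Iio {ε : ℝ} (hε : 0 < ε) : uIcc 0 (1 - ε) ⊆ Iio 1 :=
  fun _ hu => hu.2.trans_lt (max_lt one_pos (by linarith))

theorem integral_sq_inv_sqrt_one_sub_sub (c : ℝ) {ε : ℝ} (hε : 0 < ε) :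
    ∫ u in (0:ℝ)..(1 - ε), ((√(1 - u))⁻¹ - c) ^ 2
      = log (1 / ε) + 4 * c * (√ε - 1) + c ^ 2 * (1 - ε) := by
  rw [intervalIntegral.integral_eq_sub_of_hasDerivAt
    (fun _ hu => hasDerivAt_primitive_sq_inv_sqrt_one_sub_sub c
      (uIcc_zero_one_sub_subset_Iio hε hu))
    ((continuousOn_sq_inv_sqrt_one_sub_sub c).mono
      (uIcc_zero_one_sub_subset_Iio hε)).intervalIntegrable]
  simp only [sub_sub_cancel, sub_zero, log_one, sqrt_one, one_div, log_inv]
  ring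

theorem integral_sq_min_inv_sqrt_sub (c : ℝ) {ε : ℝ} (hε₀ : 0 < ε) (hε₁ : ε ≤ 1) :
    ∫ u in (0:ℝ)..1, (min (√ε)⁻¹ (√(1 - u))⁻¹ - c) ^ 2
      = log (1 / ε) + 1 - (2 - √ε) ^ 2 + (c - (2 - √ε)) ^ 2 := by
  have hs : 0 < √ε := sqrt_pos.2 hε₀
  have hhead : EqOn (fun u => (min (√ε)⁻¹ (√(1 - u))⁻¹ - c) ^ 2)
      (fun u => ((√(1 - u))⁻¹ - c) ^ 2) (uIcc 0 (1 - ε)) := fun u hu => by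
    rw [uIcc_of_le (by linarith)] at hu
    simp only
    rw [min_eq_right (inv_anti₀ hs (sqrt_le_sqrt (by linarith [hu.2])))]
  have htail : EqOn (fun u => (min (√ε)⁻¹ (√(1 - u))⁻¹ - c) ^ 2)
      (fun _ => ((√ε)⁻¹ - c) ^ 2) (uIoo (1 - ε) 1) := fun u hu => by
    rw [uIoo_of_le (by linarith)] at hu
    simp only
    rw [min_eq_left (inv_anti₀ (sqrt_pos.2 (by linarith [hu.2]))
      (sqrt_le_sqrt (by linarith [hu.1])))]
  have hhead_int : IntervalIntegrable (fun u => (min (√ε)⁻¹ (√(1 - u))⁻¹ - c) ^ 2)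
      volume 0 (1 - ε) :=
    (((continuousOn_sq_inv_sqrt_one_sub_sub c).mono
      (uIcc_zero_one_sub_subset_Iio hε₀)).intervalIntegrable).congr
      (hhead.mono uIoc_subset_uIcc).symm
  have htail_int : IntervalIntegrable (fun u => (min (√ε)⁻¹ (√(1 - u))⁻¹ - c) ^ 2)
      volume (1 - ε) 1 :=
    intervalIntegrable_const.congr_uIoo (fun u hu => (htail hu).symm)
  rw [← intervalIntegral.integral_add_adjacent_intervals hhead_int htail_int,
    intervalIntegral.integral_congr hhead, intervalIntegral.integral_congr_uIoo htail,
    integral_sq_inv_sqrt_one_sub_sub c hε₀, intervalIntegral.integral_const, smul_eq_mul]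
  have hsε : √ε ^ 2 = ε := sq_sqrt hε₀.le
  have htail_val : (1 - (1 - ε)) * ((√ε)⁻¹ - c) ^ 2 = (1 - c * √ε) ^ 2 := by
    rw [sub_sub_cancel]
    field_simp
    rw [hsε]
  rw [htail_val]
  linear_combination c ^ 2 * hsε

theorem integral_comp_eq_intervalIntegral_of_map_eq {Ω E : Type*} [MeasurableSpace Ω]
    [NormedAddCommGroup E] [NormedSpace ℝ E] {μ : Measure Ω} {U : Ω → ℝ} {a b : ℝ}
    (hab : a < b) (hU : μ.map U = volume.restrict (Icc a b)) {f : ℝ → E}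
    (hf : AEStronglyMeasurable f (volume.restrict (Icc a b))) :
    ∫ ω, f (U ω) ∂μ = ∫ u in a..b, f u := by
  have hU_meas : AEMeasurable U μ := AEMeasurable.of_map_ne_zero <| by
    rw [hU, Ne, Measure.restrict_eq_zero, Real.volume_Icc]
    simpa using hab
  rw [← integral_map hU_meas (hU ▸ hf), hU, integral_Icc_eq_integral_Ioc,
    intervalIntegral.integral_of_le hab.le]

theorem measurable_Sstat (ε : ℝ) : Measurable (Sstat ε) :=
  (Measurable.ite measurableSet_Iio (by fun_prop) measurable_const).sub_const _

theorem Sstat_of_lt_one {ε u : ℝ} (hu : u < 1) :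
    Sstat ε u = min (√ε)⁻¹ (√(1 - u))⁻¹ - (2 - √ε) := by
  rw [Sstat, if_pos hu]

/-- For every `ε ∈ (0,1)`,
`∫₀¹ (min(1/√ε, 1/√(1−u)) − (2−√ε))² du ≤ log(1/ε)`; that is, if `U` is uniformly
distributed on `[0,1]` then `E[S_ε(U)²] ≤ log(1/ε)`. -/
theorem integral_sq_Sstat_le (ε : ℝ) (hε : ε ∈ Set.Ioo (0:ℝ) 1) :
    (∫ u in (0:ℝ)..1,
        (min (Real.sqrt ε)⁻¹ (Real.sqrt (1 - u))⁻¹ - (2 - Real.sqrt ε)) ^ 2)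
      ≤ Real.log (1/ε) ∧
    ∀ {Ω : Type u} [MeasurableSpace Ω] (μ : Measure Ω) (U : Ω → ℝ),
      IsProbabilityMeasure μ →
      Measure.map U μ = volume.restrict (Set.Icc (0:ℝ) 1) →
      ∫ ω, (Sstat ε (U ω)) ^ 2 ∂μ ≤ Real.log (1/ε) := by
  obtain ⟨hε₀, hε₁⟩ := hε
  have hbound : (∫ u in (0:ℝ)..1, (min (√ε)⁻¹ (√(1 - u))⁻¹ - (2 - √ε)) ^ 2)
      ≤ log (1 / ε) := by
    rw [integral_sq_min_inv_sqrt_sub _ hε₀ hε₁.le, sub_self]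
    have : √ε ≤ 1 := sqrt_le_one.2 hε₁.le
    nlinarith
  refine ⟨hbound, fun μ U _ hU => ?_⟩
  rw [integral_comp_eq_intervalIntegral_of_map_eq zero_lt_one hU
    ((measurable_Sstat ε).pow_const 2).aestronglyMeasurable]
  have hSstat : EqOn (fun u => Sstat ε u ^ 2)
      (fun u => (min (√ε)⁻¹ (√(1 - u))⁻¹ - (2 - √ε)) ^ 2) (uIoo 0 1) := fun u hu => by
    rw [uIoo_of_le zero_le_one] at hu
    simp only [Sstat_of_lt_one hu.2]
  rwa [intervalIntegral.integral_congr_uIoo hSstat]
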